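/- Let Ψ be a concave distortion whose left derivative at 1 is strictly positive, i.e. lim_{x↑1}(1−Ψ(x))/(1−x) > 0. If (Ψ_t)_{t≥0} and (Φ_t)_{t≥0} are two concave distortion semigroups with Ψ_1 = Ψ and Φ_1 = Ψ, then Ψ_t = Φ_t for every t≥0. In other words, there exists at most one concave distortion semigroup passing through Ψ at time 1. -/

import Mathlib

open Set MeasureTheory Filter Topology

/-- The family of distortions associated with a generator `G`:
`Ψ_t(0) = 0` and, for `x ∈ (0,1]`,
`Ψ_t(x) = inf {y ∈ [x,1] : ∫_x^y 1/G(s) ds = t}` with the convention `inf ∅ = 1`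
(realized by adding `1` to the set, which does not change the infimum when the set
is nonempty since all its elements lie in `[x,1]`). -/
noncomputable def assocPsi (G : ℝ → ℝ) (t x : ℝ) : ℝ :=
  if x = 0 then 0
  else sInf ({y | y ∈ Set.Icc x 1 ∧ ∫ s in x..y, (G s)⁻¹ = t} ∪ {1})

/-- A concave distortion: a nondecreasing concave function `[0,1] → [0,1]`
with `Ψ(0) = 0` and `Ψ(1) = 1`. -/
def IsConcaveDistortion (Ψ : ℝ → ℝ) : Prop :=
  MonotoneOn Ψ (Set.Icc 0 1) ∧ ConcaveOn ℝ (Set.Icc 0 1) Ψ ∧ Ψ 0 = 0 ∧ Ψ 1 = 1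

/-- A concave distortion semigroup: a family `(Ψ_t)_{t ≥ 0}` of concave distortions
with `Ψ_s ∘ Ψ_t = Ψ_{s+t}` for `s, t ≥ 0`. -/
def IsConcaveDistortionSemigroup (Ψ : ℝ → ℝ → ℝ) : Prop :=
  (∀ t, 0 ≤ t → IsConcaveDistortion (Ψ t)) ∧
  (∀ s t, 0 ≤ s → 0 ≤ t → ∀ x ∈ Set.Icc (0:ℝ) 1, Ψ s (Ψ t x) = Ψ (s + t) x)

/-! The left derivative at `1` of a concave distortion is the limit of its chord slopes
`(1 - g y) / (1 - y)` as `y ↑ 1`. By the chain rule, `t ↦ Ψ_t'(1)` is multiplicative and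
antitone with value `L` at `t = 1`, hence the same positive function for both semigroups.
For `t ≤ 1`, `Ψ₁ t` and `Ψ₂ t` commute with `Ψ` and lie below it; pushing `x` along the orbit
`Ψ^[n] x ↑ 1`, concavity of `Ψ` makes any gap between `Ψ₁ t x` and `Ψ₂ t x` survive as a gap
between the two derivatives at `1`, which are equal. Larger `t` follow from
`Ψ_(t+1) = Ψ_t ∘ Ψ`. -/

theorem hasDerivWithinAt_Iic_one_iff_tendsto {φ : ℝ → ℝ} {d : ℝ} (hφ1 : φ 1 = 1) :
    HasDerivWithinAt φ d (Iic 1) 1 ↔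
      Tendsto (fun y => (1 - φ y) / (1 - y)) (𝓝[<] 1) (𝓝 d) := by
  rw [hasDerivWithinAt_iff_tendsto_slope, Iic_sdiff_right]
  refine tendsto_congr fun y => ?_
  rw [slope_def_field, hφ1, ← neg_div_neg_eq, neg_sub, neg_sub]

theorem Set.MapsTo.apply_iterate_of_commute {α : Type*} {s : Set α} {φ f : α → α}
    (hφ : MapsTo φ s s) (hf : ∀ x ∈ s, f (φ x) = φ (f x)) (n : ℕ) {x : α} (hx : x ∈ s) :
    f (φ^[n] x) = φ^[n] (f x) := by
  induction n with
  | zero => rfl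
  | succ n ih =>
    rw [Function.iterate_succ_apply', Function.iterate_succ_apply', hf _ (hφ.iterate n hx), ih]

section MultiplicativeAntitone

variable {f g : ℝ → ℝ}

theorem map_nat_mul_of_map_add (hf : ∀ s t, 0 ≤ s → 0 ≤ t → f (s + t) = f s * f t)
    (h1 : f 1 ≠ 0) (n : ℕ) {t : ℝ} (ht : 0 ≤ t) : f (n * t) = f t ^ n := by
  have h0 : f 0 = 1 := by
    have := hf 1 0 zero_le_one le_rfl
    rw [add_zero, eq_comm, mul_eq_left₀ h1] at this
    exact this
  induction n with
  | zero => simpa using h0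
  | succ n ih =>
    rw [Nat.cast_succ, add_one_mul, hf _ _ (mul_nonneg n.cast_nonneg ht) ht, ih, pow_succ]

theorem pos_of_antitoneOn_of_map_add (hanti : AntitoneOn f (Ici 0))
    (hf : ∀ s t, 0 ≤ s → 0 ≤ t → f (s + t) = f s * f t) (h1 : 0 < f 1) {t : ℝ} (ht : 0 ≤ t) :
    0 < f t :=
  calc 0 < f 1 ^ ⌈t⌉₊ := pow_pos h1 _
    _ = f (⌈t⌉₊ * 1) := (map_nat_mul_of_map_add hf h1.ne' _ zero_le_one).symm
    _ ≤ f t := hanti ht (by simp) (by simpa using Nat.le_ceil t)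

/-- Comparing `f t ^ n = f (n t)` and `g t ^ n = g (n t)` with the values `f 1 ^ m` at the
integers `m` around `n t` gives `f 1 * f t ^ n ≤ g t ^ n` for every `n`, so `f t ≤ g t`. -/
theorem le_of_antitoneOn_of_map_add (hf_anti : AntitoneOn f (Ici 0))
    (hg_anti : AntitoneOn g (Ici 0)) (hf : ∀ s t, 0 ≤ s → 0 ≤ t → f (s + t) = f s * f t)
    (hg : ∀ s t, 0 ≤ s → 0 ≤ t → g (s + t) = g s * g t) (h1 : f 1 = g 1) (hpos : 0 < f 1)
    {t : ℝ} (ht : 0 ≤ t) : f t ≤ g t := by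
  have hgt : 0 < g t := pos_of_antitoneOn_of_map_add hg_anti hg (h1 ▸ hpos) ht
  have hpow : ∀ n : ℕ, f 1 * f t ^ n ≤ g t ^ n := by
    intro n
    have hnt : 0 ≤ n * t := mul_nonneg n.cast_nonneg ht
    calc f 1 * f t ^ n = f 1 * f (n * t) := by rw [map_nat_mul_of_map_add hf hpos.ne' n ht]
      _ ≤ f 1 * f (⌊n * t⌋₊ * 1) := by
        gcongr
        exact hf_anti (by simp) hnt (by simpa using Nat.floor_le hnt)
      _ = g ((⌊n * t⌋₊ + 1 : ℕ) * 1) := by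
        rw [map_nat_mul_of_map_add hf hpos.ne' _ zero_le_one,
          map_nat_mul_of_map_add hg (h1 ▸ hpos.ne') _ zero_le_one, ← h1, pow_succ, mul_comm]
      _ ≤ g (n * t) :=
        hg_anti hnt (mem_Ici.2 (by positivity)) (by simpa using (Nat.lt_floor_add_one _).le)
      _ = g t ^ n := map_nat_mul_of_map_add hg (h1 ▸ hpos.ne') n ht
  by_contra! hlt
  obtain ⟨n, hn⟩ := pow_unbounded_of_one_lt (f 1)⁻¹ ((one_lt_div hgt).2 hlt)
  rw [div_pow, lt_div_iff₀ (pow_pos hgt n), inv_mul_lt_iff₀ hpos] at hn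
  exact (hpow n).not_gt hn

theorem eqOn_of_antitoneOn_of_map_add (hf_anti : AntitoneOn f (Ici 0))
    (hg_anti : AntitoneOn g (Ici 0)) (hf : ∀ s t, 0 ≤ s → 0 ≤ t → f (s + t) = f s * f t)
    (hg : ∀ s t, 0 ≤ s → 0 ≤ t → g (s + t) = g s * g t) (h1 : f 1 = g 1) (hpos : 0 < f 1) :
    EqOn f g (Ici 0) := fun _ ht =>
  (le_of_antitoneOn_of_map_add hf_anti hg_anti hf hg h1 hpos ht).antisymm
    (le_of_antitoneOn_of_map_add hg_anti hf_anti hg hf h1.symm (h1 ▸ hpos) ht)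

end MultiplicativeAntitone

namespace IsConcaveDistortion

variable {φ f g : ℝ → ℝ} {d : ℝ}

theorem mapsTo (hφ : IsConcaveDistortion φ) : MapsTo φ (Icc 0 1) (Icc 0 1) := fun _ hx =>
  ⟨hφ.2.2.1 ▸ hφ.1 ⟨le_rfl, zero_le_one⟩ hx hx.1, hφ.2.2.2 ▸ hφ.1 hx ⟨zero_le_one, le_rfl⟩ hx.2⟩

theorem le_apply (hφ : IsConcaveDistortion φ) {x : ℝ} (hx : x ∈ Icc (0 : ℝ) 1) : x ≤ φ x := by
  have := hφ.2.1.2 (left_mem_Icc.2 zero_le_one) (right_mem_Icc.2 zero_le_one)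
    (sub_nonneg.2 hx.2) hx.1 (sub_add_cancel 1 x)
  simpa [hφ.2.2.1, hφ.2.2.2] using this

theorem slope_one (hφ : IsConcaveDistortion φ) (y : ℝ) :
    slope φ 1 y = (1 - φ y) / (1 - y) := by
  rw [slope_def_field, hφ.2.2.2, ← neg_div_neg_eq, neg_sub, neg_sub]

theorem antitoneOn_slope_one (hφ : IsConcaveDistortion φ) : AntitoneOn (slope φ 1) (Ico 0 1) := by
  simpa only [Icc_sdiff_right] using hφ.2.1.slope_anti (right_mem_Icc.2 zero_le_one)

theorem one_sub_apply_mul_le (hφ : IsConcaveDistortion φ) {a b : ℝ} (hb : b ∈ Icc (0 : ℝ) 1)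
    (ha : a ∈ Icc (0 : ℝ) 1) (hba : b ≤ a) : (1 - φ a) * (1 - b) ≤ (1 - φ b) * (1 - a) := by
  rcases ha.2.eq_or_lt with rfl | ha1
  · simp [hφ.2.2.2]
  have := hφ.antitoneOn_slope_one ⟨hb.1, hba.trans_lt ha1⟩ ⟨ha.1, ha1⟩ hba
  rwa [hφ.slope_one, hφ.slope_one, div_le_div_iff₀ (by linarith) (by linarith)] at this

theorem iterate_le_iterate (hφ : IsConcaveDistortion φ) {a b : ℝ} (hb : b ∈ Icc (0 : ℝ) 1)
    (ha : a ∈ Icc (0 : ℝ) 1) (hba : b ≤ a) (n : ℕ) : φ^[n] b ≤ φ^[n] a := by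
  induction n with
  | zero => exact hba
  | succ n ih =>
    rw [Function.iterate_succ_apply', Function.iterate_succ_apply']
    exact hφ.1 (hφ.mapsTo.iterate n hb) (hφ.mapsTo.iterate n ha) ih

theorem one_sub_mul_one_sub_iterate_le (hφ : IsConcaveDistortion φ) {a b : ℝ}
    (hb : b ∈ Icc (0 : ℝ) 1) (ha : a ∈ Icc (0 : ℝ) 1) (hba : b ≤ a) (n : ℕ) :
    (1 - b) * (1 - φ^[n] a) ≤ (1 - a) * (1 - φ^[n] b) := by
  induction n with
  | zero => exact (mul_comm _ _).le
  | succ n ih =>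
    rw [Function.iterate_succ_apply', Function.iterate_succ_apply']
    set A := φ^[n] a
    set B := φ^[n] b
    have hA : A ∈ Icc (0 : ℝ) 1 := hφ.mapsTo.iterate n ha
    have hB : B ∈ Icc (0 : ℝ) 1 := hφ.mapsTo.iterate n hb
    have hBA : B ≤ A := hφ.iterate_le_iterate hb ha hba n
    have hφB : φ B ≤ 1 := (hφ.mapsTo hB).2
    rcases hB.2.eq_or_lt with hB1 | hB1
    · have hA1 : A = 1 := le_antisymm hA.2 (hB1 ▸ hBA)
      rw [hA1, hφ.2.2.2, sub_self, mul_zero]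
      exact mul_nonneg (sub_nonneg.2 ha.2) (sub_nonneg.2 hφB)
    refine le_of_mul_le_mul_right ?_ (sub_pos.2 hB1)
    calc (1 - b) * (1 - φ A) * (1 - B) ≤ (1 - b) * ((1 - φ B) * (1 - A)) := by
          rw [mul_assoc]
          exact mul_le_mul_of_nonneg_left (hφ.one_sub_apply_mul_le hB hA hBA)
            (sub_nonneg.2 hb.2)
      _ = (1 - φ B) * ((1 - b) * (1 - A)) := by ring
      _ ≤ (1 - φ B) * ((1 - a) * (1 - B)) :=
          mul_le_mul_of_nonneg_left ih (sub_nonneg.2 hφB)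
      _ = (1 - a) * (1 - φ B) * (1 - B) := by ring

/-- The limit `p` of the nondecreasing orbit of `x` is a fixed point, by continuity of `φ`
in the interior; `p < 1` would make the chord slope at `p` equal to `1`, but it is at most the
chord slope at `x`, which is `< 1`. -/
theorem tendsto_iterate_one (hφ : IsConcaveDistortion φ) {x : ℝ} (hx : x ∈ Icc (0 : ℝ) 1)
    (hxφ : x < φ x) : Tendsto (fun n => φ^[n] x) atTop (𝓝 1) := by
  set u : ℕ → ℝ := fun n => φ^[n] x
  have hu_mem : ∀ n, u n ∈ Icc (0 : ℝ) 1 := fun n => hφ.mapsTo.iterate n hx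
  have hu_mono : Monotone u := monotone_nat_of_le_succ fun n => by
    simp only [u, Function.iterate_succ_apply']
    exact hφ.le_apply (hu_mem n)
  have hbdd : BddAbove (range u) := ⟨1, forall_mem_range.2 fun n => (hu_mem n).2⟩
  have hlim := tendsto_atTop_ciSup hu_mono hbdd
  set p := ⨆ n, u n
  suffices p = 1 by rwa [this] at hlim
  have hxp : φ x ≤ p := le_ciSup hbdd 1
  refine (ciSup_le fun n => (hu_mem n).2).eq_of_not_lt fun hp1 => ?_
  have hp_int : p ∈ interior (Icc (0 : ℝ) 1) := by
    rw [interior_Icc]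
    exact ⟨hx.1.trans_lt (hxφ.trans_le hxp), hp1⟩
  have hfix : φ p = p := isFixedPt_of_tendsto_iterate hlim <|
    hφ.2.1.continuousOn_interior.continuousAt (isOpen_interior.mem_nhds hp_int)
  have hxp' : x < p := hxφ.trans_le hxp
  have := hφ.antitoneOn_slope_one ⟨hx.1, hxp'.trans hp1⟩ ⟨hx.1.trans hxp'.le, hp1⟩ hxp'.le
  rw [hφ.slope_one, hφ.slope_one, hfix, div_self (sub_pos.2 hp1).ne',
    one_le_div (sub_pos.2 (hxp'.trans hp1))] at this
  linarith

theorem differentiableWithinAt_one (hφ : IsConcaveDistortion φ) :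
    DifferentiableWithinAt ℝ φ (Icc 0 1) 1 := by
  have hbdd : BddBelow (slope φ 1 '' Ioo 0 1) := ⟨0, forall_mem_image.2 fun y hy => by
    rw [hφ.slope_one]
    exact div_nonneg (sub_nonneg.2 (hφ.mapsTo (Ioo_subset_Icc_self hy)).2) (sub_nonneg.2 hy.2.le)⟩
  have hlim := (hφ.antitoneOn_slope_one.mono Ioo_subset_Ico_self).tendsto_nhdsWithin_Ioo_left
    ⟨1 / 2, by norm_num, by norm_num⟩ hbdd
  rw [← Iic_sdiff_right, ← hasDerivWithinAt_iff_tendsto_slope] at hlim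
  exact (hlim.mono Icc_subset_Iic_self).differentiableWithinAt

theorem derivWithin_one_le_one (hφ : IsConcaveDistortion φ) :
    derivWithin φ (Icc 0 1) 1 ≤ 1 := by
  have := hφ.2.1.derivWithin_le_slope (left_mem_Icc.2 zero_le_one) (right_mem_Icc.2 zero_le_one)
    zero_lt_one hφ.differentiableWithinAt_one
  rwa [slope_comm, hφ.slope_one, hφ.2.2.1, sub_zero, div_one] at this

theorem mapsTo_Ico (hφ : IsConcaveDistortion φ) (hd : 0 < d)
    (hφ' : HasDerivWithinAt φ d (Icc 0 1) 1) : MapsTo φ (Ico 0 1) (Ico 0 1) := fun y hy => by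
  refine ⟨(hφ.mapsTo (Ico_subset_Icc_self hy)).1, ?_⟩
  have := hd.trans_le <| hφ.2.1.le_slope_of_hasDerivWithinAt (Ico_subset_Icc_self hy)
    (right_mem_Icc.2 zero_le_one) hy.2 hφ'
  rw [slope_comm, hφ.slope_one, div_pos_iff_of_pos_right (sub_pos.2 hy.2)] at this
  linarith

/-- Along the orbit `u n = φ^[n] x`, which tends to `1`, `f (u n) = φ^[n] (f x)` and
`g (u n) = φ^[n] (g x)`. If `g x < f x`, the ratio of the chord slopes of `f` and `g` at `u n`
stays below `(1 - f x) / (1 - g x) < 1`, while both slopes tend to the same `d > 0`. -/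
theorem le_of_commute_of_hasDerivWithinAt (hφ : IsConcaveDistortion φ)
    (hφ_Ico : MapsTo φ (Ico 0 1) (Ico 0 1))
    (hf : IsConcaveDistortion f) (hg : IsConcaveDistortion g)
    (hfφ : ∀ x ∈ Icc (0 : ℝ) 1, f (φ x) = φ (f x)) (hgφ : ∀ x ∈ Icc (0 : ℝ) 1, g (φ x) = φ (g x))
    (hf_le : ∀ x ∈ Icc (0 : ℝ) 1, f x ≤ φ x) (hd : 0 < d)
    (hf' : HasDerivWithinAt f d (Icc 0 1) 1) (hg' : HasDerivWithinAt g d (Icc 0 1) 1)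
    {x : ℝ} (hx : x ∈ Icc (0 : ℝ) 1) : f x ≤ g x := by
  rcases (hφ.le_apply hx).eq_or_lt with hfix | hxφ
  · exact (hf_le x hx).trans (hfix ▸ hg.le_apply hx)
  by_contra! hgf
  have hx' : x ∈ Ico (0 : ℝ) 1 := ⟨hx.1, hxφ.trans_le (hφ.mapsTo hx).2⟩
  have hu : Tendsto (fun n => φ^[n] x) atTop (𝓝[Ico 0 1] 1) :=
    tendsto_nhdsWithin_iff.2 ⟨hφ.tendsto_iterate_one hx hxφ,
      Eventually.of_forall fun n => hφ_Ico.iterate n hx'⟩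
  have hslope : ∀ n, (1 - g x) * slope f 1 (φ^[n] x) ≤ (1 - f x) * slope g 1 (φ^[n] x) := by
    intro n
    have hun := hφ_Ico.iterate n hx'
    rw [hf.slope_one, hg.slope_one, mul_div_assoc', mul_div_assoc',
      div_le_div_iff_of_pos_right (sub_pos.2 hun.2),
      hφ.mapsTo.apply_iterate_of_commute hfφ n hx, hφ.mapsTo.apply_iterate_of_commute hgφ n hx]
    exact hφ.one_sub_mul_one_sub_iterate_le (hg.mapsTo hx) (hf.mapsTo hx) hgf.le n
  have hlim : ∀ {h : ℝ → ℝ}, HasDerivWithinAt h d (Icc 0 1) 1 →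
      Tendsto (fun n => slope h 1 (φ^[n] x)) atTop (𝓝 d) := fun h' => by
    rw [hasDerivWithinAt_iff_tendsto_slope, Icc_sdiff_right] at h'
    exact h'.comp hu
  have := le_of_tendsto_of_tendsto' ((hlim hf').const_mul _) ((hlim hg').const_mul _) hslope
  linarith [le_of_mul_le_mul_right this hd]

end IsConcaveDistortion

namespace IsConcaveDistortionSemigroup

variable {Ψ Ψ₁ Ψ₂ : ℝ → ℝ → ℝ} {s t : ℝ}

theorem apply_comm (hΨ : IsConcaveDistortionSemigroup Ψ) (hs : 0 ≤ s) (ht : 0 ≤ t) {x : ℝ}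
    (hx : x ∈ Icc (0 : ℝ) 1) : Ψ s (Ψ t x) = Ψ t (Ψ s x) := by
  rw [hΨ.2 s t hs ht x hx, hΨ.2 t s ht hs x hx, add_comm]

theorem apply_le_apply_one (hΨ : IsConcaveDistortionSemigroup Ψ) (ht : t ∈ Icc (0 : ℝ) 1)
    {x : ℝ} (hx : x ∈ Icc (0 : ℝ) 1) : Ψ t x ≤ Ψ 1 x := by
  have := (hΨ.1 (1 - t) (sub_nonneg.2 ht.2)).le_apply ((hΨ.1 t ht.1).mapsTo hx)
  rwa [hΨ.2 _ _ (sub_nonneg.2 ht.2) ht.1 x hx, sub_add_cancel] at this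

theorem derivWithin_add (hΨ : IsConcaveDistortionSemigroup Ψ) (hs : 0 ≤ s) (ht : 0 ≤ t) :
    derivWithin (Ψ (s + t)) (Icc 0 1) 1 =
      derivWithin (Ψ s) (Icc 0 1) 1 * derivWithin (Ψ t) (Icc 0 1) 1 := by
  have hcomp := ((hΨ.1 s hs).differentiableWithinAt_one.hasDerivWithinAt.comp_of_eq 1
    (hΨ.1 t ht).differentiableWithinAt_one.hasDerivWithinAt (hΨ.1 t ht).mapsTo
    (hΨ.1 t ht).2.2.2.symm)
  exact (hcomp.congr (fun x hx => (hΨ.2 s t hs ht x hx).symm)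
    (hΨ.2 s t hs ht 1 (right_mem_Icc.2 zero_le_one)).symm).derivWithin
    (uniqueDiffOn_Icc_zero_one 1 (right_mem_Icc.2 zero_le_one))

theorem antitoneOn_derivWithin (hΨ : IsConcaveDistortionSemigroup Ψ) :
    AntitoneOn (fun t => derivWithin (Ψ t) (Icc 0 1) 1) (Ici 0) := fun s hs t _ hst => by
  dsimp only
  rw [← add_sub_cancel s t, hΨ.derivWithin_add hs (sub_nonneg.2 hst)]
  exact mul_le_of_le_one_right (hΨ.1 s hs).1.derivWithin_nonneg
    (hΨ.1 _ (sub_nonneg.2 hst)).derivWithin_one_le_one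

theorem apply_le_of_derivWithin_eq (h₁ : IsConcaveDistortionSemigroup Ψ₁)
    (h₂ : IsConcaveDistortionSemigroup Ψ₂) (he : ∀ x ∈ Icc (0 : ℝ) 1, Ψ₁ 1 x = Ψ₂ 1 x)
    (hpos : 0 < derivWithin (Ψ₁ 1) (Icc 0 1) 1) (ht : t ∈ Icc (0 : ℝ) 1)
    (hD : derivWithin (Ψ₁ t) (Icc 0 1) 1 = derivWithin (Ψ₂ t) (Icc 0 1) 1) {x : ℝ}
    (hx : x ∈ Icc (0 : ℝ) 1) : Ψ₁ t x ≤ Ψ₂ t x := by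
  have hφ := h₁.1 1 zero_le_one
  have htpos : 0 < derivWithin (Ψ₁ t) (Icc 0 1) 1 := by
    refine ((h₁.1 t ht.1).1.derivWithin_nonneg).lt_of_ne fun h => hpos.ne' ?_
    have := h₁.derivWithin_add ht.1 (sub_nonneg.2 ht.2)
    rw [add_sub_cancel, ← h, zero_mul] at this
    exact this
  refine hφ.le_of_commute_of_hasDerivWithinAt
    (hφ.mapsTo_Ico hpos hφ.differentiableWithinAt_one.hasDerivWithinAt)
    (h₁.1 t ht.1) (h₂.1 t ht.1) (fun y hy => h₁.apply_comm ht.1 zero_le_one hy)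
    (fun y hy => ?_) (fun y hy => h₁.apply_le_apply_one ht hy) htpos
    (h₁.1 t ht.1).differentiableWithinAt_one.hasDerivWithinAt
    (hD ▸ (h₂.1 t ht.1).differentiableWithinAt_one.hasDerivWithinAt) hx
  rw [he y hy, he _ ((h₂.1 t ht.1).mapsTo hy), h₂.apply_comm ht.1 zero_le_one hy]

theorem eqOn_of_eqOn_Icc (h₁ : IsConcaveDistortionSemigroup Ψ₁)
    (h₂ : IsConcaveDistortionSemigroup Ψ₂)
    (h : ∀ t ∈ Icc (0 : ℝ) 1, ∀ x ∈ Icc (0 : ℝ) 1, Ψ₁ t x = Ψ₂ t x) :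
    ∀ t, 0 ≤ t → ∀ x ∈ Icc (0 : ℝ) 1, Ψ₁ t x = Ψ₂ t x := by
  have key : ∀ n : ℕ, ∀ t ∈ Icc (0 : ℝ) (n + 1), ∀ x ∈ Icc (0 : ℝ) 1, Ψ₁ t x = Ψ₂ t x := by
    intro n
    induction n with
    | zero => simpa using h
    | succ n ih =>
      intro t ht x hx
      rcases le_or_gt t 1 with ht1 | ht1
      · exact h t ⟨ht.1, ht1⟩ x hx
      obtain ⟨s, rfl⟩ : ∃ s, t = s + 1 := ⟨t - 1, by ring⟩
      have hs : 0 ≤ s := by linarith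
      rw [← h₁.2 s 1 hs zero_le_one x hx, ← h₂.2 s 1 hs zero_le_one x hx,
        h 1 (right_mem_Icc.2 zero_le_one) x hx]
      exact ih s ⟨hs, by push_cast at ht; linarith [ht.2]⟩ _ ((h₂.1 1 zero_le_one).mapsTo hx)
  exact fun t ht => key ⌈t⌉₊ t ⟨ht, (Nat.le_ceil t).trans (le_add_of_nonneg_right zero_le_one)⟩

end IsConcaveDistortionSemigroup

/-- uniqueness, Theorem L1: if `Ψ` is a concave distortion whose
left derivative at `1`, `lim_{x↑1} (1-Ψ(x))/(1-x)`, is a strictly positive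
number, then any two concave distortion semigroups passing through `Ψ` at time 1
coincide on `[0,1]` for all `t ≥ 0`. -/
theorem stmt_11 (Ψ : ℝ → ℝ) (hΨ : IsConcaveDistortion Ψ)
    (L : ℝ) (hL : 0 < L)
    (hDer : Filter.Tendsto (fun x => (1 - Ψ x) / (1 - x))
      (nhdsWithin 1 (Set.Iio 1)) (nhds L))
    (Ψ₁ Ψ₂ : ℝ → ℝ → ℝ)
    (h1 : IsConcaveDistortionSemigroup Ψ₁)
    (h2 : IsConcaveDistortionSemigroup Ψ₂)
    (he1 : ∀ x ∈ Set.Icc (0:ℝ) 1, Ψ₁ 1 x = Ψ x)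
    (he2 : ∀ x ∈ Set.Icc (0:ℝ) 1, Ψ₂ 1 x = Ψ x) :
    ∀ t, 0 ≤ t → ∀ x ∈ Set.Icc (0:ℝ) 1, Ψ₁ t x = Ψ₂ t x := by
  have hΨ' : HasDerivWithinAt Ψ L (Icc 0 1) 1 :=
    ((hasDerivWithinAt_Iic_one_iff_tendsto hΨ.2.2.2).2 hDer).mono Icc_subset_Iic_self
  have hD_one : ∀ {Ξ : ℝ → ℝ → ℝ}, (∀ x ∈ Icc (0 : ℝ) 1, Ξ 1 x = Ψ x) →
      derivWithin (Ξ 1) (Icc 0 1) 1 = L := fun he =>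
    (hΨ'.congr he (he 1 (right_mem_Icc.2 zero_le_one))).derivWithin
      (uniqueDiffOn_Icc_zero_one 1 (right_mem_Icc.2 zero_le_one))
  have hD₁ := hD_one he1
  have hD₂ := hD_one he2
  have hD : EqOn (fun t => derivWithin (Ψ₁ t) (Icc 0 1) 1)
      (fun t => derivWithin (Ψ₂ t) (Icc 0 1) 1) (Ici 0) :=
    eqOn_of_antitoneOn_of_map_add h1.antitoneOn_derivWithin h2.antitoneOn_derivWithin
      (fun _ _ => h1.derivWithin_add) (fun _ _ => h2.derivWithin_add) (hD₁.trans hD₂.symm)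
      (hD₁ ▸ hL)
  have he : ∀ x ∈ Icc (0 : ℝ) 1, Ψ₁ 1 x = Ψ₂ 1 x := fun x hx => (he1 x hx).trans (he2 x hx).symm
  refine h1.eqOn_of_eqOn_Icc h2 fun t ht x hx => le_antisymm ?_ ?_
  · exact h1.apply_le_of_derivWithin_eq h2 he (hD₁ ▸ hL) ht (hD ht.1) hx
  · exact h2.apply_le_of_derivWithin_eq h1 (fun x hx => (he x hx).symm) (hD₂ ▸ hL) ht
      (hD ht.1).symm hx
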